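/- arXiv:math/0210216 — 3 statements merged into one kernel-verified Lean document; each statement's English description precedes it below -/
import Mathlib

section
/- For all indices i, s and every point (x,v): (∇_i V^s)(x, L(x,v)) = −Σ_q (∇_i L_q)(x,v) g^{sq}(x,v), where ∇_i V^s is the p-representation horizontal covariant derivative of the components V^s and ∇_i L_q is the v-representation horizontal covariant derivative of the components L_q. -/
/- Coordinate formalization of extended tensor fields in v- and p-representation
   for a generalized Legendre transformation λ(x,v) = (x, L(x,v)). -/

noncomputable section

open scoped BigOperators

/-- A point of the (co)tangent bundle in a single chart: a pair (x, v) or (x, p). -/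
abbrev Pt (n : ℕ) := (Fin n → ℝ) × (Fin n → ℝ)

/-- An indexed family of scalar functions (components of a (co)vector field). -/
abbrev Fam (n : ℕ) := Fin n → Pt n → ℝ

/-- Components Γ^k_{ij} of an extended connection (or of a gauge tensor T^k_{ij}). -/
abbrev Conn (n : ℕ) := Fin n → Fin n → Fin n → Pt n → ℝ

variable {n : ℕ}

/-- Kronecker delta δ^i_j. -/
def kron (i j : Fin n) : ℝ := if i = j then 1 else 0

/-- Partial derivative ∂f/∂x^m (first slot). -/
def pdx (m : Fin n) (f : Pt n → ℝ) (q : Pt n) : ℝ :=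
  fderiv ℝ f q (Pi.single m 1, 0)

/-- Partial derivative ∂f/∂v^m (resp. ∂f/∂p_m): second slot. -/
def pdv (m : Fin n) (f : Pt n → ℝ) (q : Pt n) : ℝ :=
  fderiv ℝ f q (0, Pi.single m 1)

/-- The generalized Legendre transformation λ(x,v) = (x, L(x,v)). -/
def lam (L : Fam n) (q : Pt n) : Pt n := (q.1, fun i => L i q)

/-- The inverse map λ⁻¹(x,p) = (x, V(x,p)). -/
def lamInv (V : Fam n) (q : Pt n) : Pt n := (q.1, fun i => V i q)

/-- g_{rk} = ∂L_r/∂v^k. -/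
def gdn (L : Fam n) (r k : Fin n) (q : Pt n) : ℝ := pdv k (L r) q

/-- L^i = Σ_q L_q g^{qi}. -/
def Lup (L : Fam n) (ginv : Fin n → Fin n → Pt n → ℝ) (i : Fin n) (q : Pt n) : ℝ :=
  ∑ j, L j q * ginv j i q

/-- |L|² = Σ_s L_s L^s. -/
def L2 (L : Fam n) (ginv : Fin n → Fin n → Pt n → ℝ) (q : Pt n) : ℝ :=
  ∑ s, L s q * Lup L ginv s q

/-- p-representation: W^i = Σ_s p_s ∂V^s/∂p_i. -/
def Wp (V : Fam n) (i : Fin n) (q : Pt n) : ℝ :=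
  ∑ s, q.2 s * pdv i (V s) q

/-- p-representation: Ω = Σ_s p_s W^s. -/
def Omga (V : Fam n) (q : Pt n) : ℝ := ∑ s, q.2 s * Wp V s q

/-- p-representation projector P̌^i_j = δ^i_j − W^i p_j / Ω. -/
def Pp (V : Fam n) (i j : Fin n) (q : Pt n) : ℝ :=
  kron i j - Wp V i q * q.2 j / Omga V q

/-- v-representation projector P^i_j = δ^i_j − L^i L_j / |L|². -/
def Pv (L : Fam n) (ginv : Fin n → Fin n → Pt n → ℝ) (i j : Fin n) (q : Pt n) : ℝ :=
  kron i j - Lup L ginv i q * L j q / L2 L ginv q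

/-- Scalar part of the v-representation horizontal covariant derivative:
    ∂f/∂x^m − Σ_{a,b} v^a Γ^b_{am} ∂f/∂v^b. -/
def vS (Γ : Conn n) (m : Fin n) (f : Pt n → ℝ) (q : Pt n) : ℝ :=
  pdx m f q - ∑ a, ∑ b, q.2 a * Γ b a m q * pdv b f q

/-- v-representation ∇_m X_j of a covector field. -/
def vCov (Γ : Conn n) (m : Fin n) (X : Fam n) (j : Fin n) (q : Pt n) : ℝ :=
  vS Γ m (X j) q - ∑ b, Γ b m j q * X b q

/-- v-representation ∇_m X^i of a vector field. -/
def vVec (Γ : Conn n) (m : Fin n) (X : Fam n) (i : Fin n) (q : Pt n) : ℝ :=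
  vS Γ m (X i) q + ∑ a, Γ i m a q * X a q

/-- v-representation ∇_k Y_{m r} of a (0,2) tensor field. -/
def vCov2 (Γ : Conn n) (k : Fin n) (Y : Fin n → Fin n → Pt n → ℝ)
    (m r : Fin n) (q : Pt n) : ℝ :=
  vS Γ k (Y m r) q - (∑ b, Γ b k m q * Y b r q) - (∑ b, Γ b k r q * Y m b q)

/-- v-representation ∇_m T^k_{ij} of a (1,2) tensor field. -/
def vT12 (Γ : Conn n) (m : Fin n) (T : Conn n) (k i j : Fin n) (q : Pt n) : ℝ :=
  vS Γ m (T k i j) q + (∑ a, Γ k m a q * T a i j q)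
    - (∑ b, Γ b m i q * T k b j q) - (∑ b, Γ b m j q * T k i b q)

/-- Connection components in p-representation: Γ^k_{ij} ∘ λ⁻¹. -/
def Gp (Γ : Conn n) (V : Fam n) (k i j : Fin n) (q : Pt n) : ℝ :=
  Γ k i j (lamInv V q)

/-- Scalar part of the p-representation horizontal covariant derivative:
    ∂f/∂x^m + Σ_{a,b} p_a Γ^a_{mb} ∂f/∂p_b. -/
def pS (G : Conn n) (m : Fin n) (f : Pt n → ℝ) (q : Pt n) : ℝ :=
  pdx m f q + ∑ a, ∑ b, q.2 a * G a m b q * pdv b f q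

/-- p-representation ∇_m X_j of a covector field. -/
def pCov (G : Conn n) (m : Fin n) (X : Fam n) (j : Fin n) (q : Pt n) : ℝ :=
  pS G m (X j) q - ∑ b, G b m j q * X b q

/-- p-representation ∇_m X^i of a vector field. -/
def pVec (G : Conn n) (m : Fin n) (X : Fam n) (i : Fin n) (q : Pt n) : ℝ :=
  pS G m (X i) q + ∑ a, G i m a q * X a q

/-- Force vector F^i = Φ^i + Σ_{j,k} Γ^i_{jk} v^j v^k. -/
def Fvec (Γ : Conn n) (Φ : Fam n) (i : Fin n) (q : Pt n) : ℝ :=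
  Φ i q + ∑ j, ∑ k, Γ i j k q * q.2 j * q.2 k

/-- Force covector F_q = Σ_i g_{qi} F^i. -/
def Fcov (L : Fam n) (Γ : Conn n) (Φ : Fam n) (i : Fin n) (q : Pt n) : ℝ :=
  ∑ j, gdn L i j q * Fvec Γ Φ j q

/-- p-representation force covector Q_i = Θ_i − Σ_{j,k} Γ^k_{ij} V^j p_k. -/
def Qp (Θ : Fam n) (Γ : Conn n) (V : Fam n) (i : Fin n) (q : Pt n) : ℝ :=
  Θ i q - ∑ j, ∑ k, Gp Γ V k i j q * V j q * q.2 k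

/-- p-representation covector Ǔ_i = Q_i + Σ_s (∇_i V^s) p_s. -/
def Ucheck (Θ : Fam n) (Γ : Conn n) (V : Fam n) (i : Fin n) (q : Pt n) : ℝ :=
  Qp Θ Γ V i q + ∑ s, pVec (Gp Γ V) i V s q * q.2 s

/-- v-representation covector U_i = Σ_q v^q ∇_q L_i − Σ_q L^q ∇_i L_q + F_i. -/
def Uv (L : Fam n) (ginv : Fin n → Fin n → Pt n → ℝ) (Γ : Conn n) (Φ : Fam n)
    (i : Fin n) (q : Pt n) : ℝ :=
  (∑ j, q.2 j * vCov Γ j L i q) - (∑ j, Lup L ginv j q * vCov Γ i L j q) + Fcov L Γ Φ i q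

/-- v-representation dynamic curvature tensor D^k_{rij} = −∂Γ^k_{ir}/∂v^j. -/
def Dv (Γ : Conn n) (k r i j : Fin n) (q : Pt n) : ℝ := -(pdv j (Γ k i r) q)

/-- v-representation curvature tensor R^k_{rij}. -/
def Rv (Γ : Conn n) (k r i j : Fin n) (q : Pt n) : ℝ :=
  pdx i (Γ k j r) q - pdx j (Γ k i r) q
  + (∑ m, (Γ k i m q * Γ m j r q - Γ k j m q * Γ m i r q))
  - (∑ m, ∑ s, q.2 s * Γ m i s q * pdv m (Γ k j r) q)
  + (∑ m, ∑ s, q.2 s * Γ m j s q * pdv m (Γ k i r) q)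

/-- p-representation dynamic curvature tensor Ď^{kr}_{ij} = −∂Γ^k_{ij}/∂p_r. -/
def Dp (G : Conn n) (k r i j : Fin n) (q : Pt n) : ℝ := -(pdv r (G k i j) q)

/-- p-representation curvature tensor Ř^k_{rij}. -/
def Rp (G : Conn n) (k r i j : Fin n) (q : Pt n) : ℝ :=
  pdx i (G k j r) q - pdx j (G k i r) q
  + (∑ m, (G k i m q * G m j r q - G k j m q * G m i r q))
  + (∑ m, ∑ s, q.2 s * G s m i q * pdv m (G k j r) q)
  - (∑ m, ∑ s, q.2 s * G s m j q * pdv m (G k i r) q)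

/-- p-representation vector field α̌^k. -/
def alphaCheck (Θ : Fam n) (Γ : Conn n) (V : Fam n) (k : Fin n) (q : Pt n) : ℝ :=
  (∑ r, pdv k (V r) q * Ucheck Θ Γ V r q)
  + (∑ r, pVec (Gp Γ V) r (Wp V) k q * V r q)
  + (∑ r, pdv r (Wp V k) q * Qp Θ Γ V r q)
  + (∑ r, Wp V r q * pdv k (Qp Θ Γ V r) q)
  - (∑ r, ∑ s, ∑ j, q.2 s * Dp (Gp Γ V) s k r j q * Wp V r q * V j q)

/-- v-representation vector field α^k. -/
def alphaV (L : Fam n) (ginv : Fin n → Fin n → Pt n → ℝ) (Γ : Conn n) (Φ : Fam n)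
    (k : Fin n) (q : Pt n) : ℝ :=
  (∑ r, ginv r k q * Uv L ginv Γ Φ r q)
  + (∑ r, q.2 r * vVec Γ r (Lup L ginv) k q)
  + (∑ j, Fvec Γ Φ j q * pdv j (Lup L ginv k) q)
  + (∑ j, ∑ r, ∑ s, Lup L ginv r q * ginv j k q * q.2 s * pdv j (vCov Γ s L r) q)
  + (∑ j, ∑ r, Lup L ginv r q * ginv j k q * pdv j (Fcov L Γ Φ r) q)
  + (∑ j, ∑ r, Lup L ginv r q * ginv j k q * vCov Γ j L r q)
  - (∑ j, ∑ m, ∑ r, ∑ s, ginv m k q * L s q * Dv Γ s r j m q * Lup L ginv r q * q.2 j)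

/-- p-representation covector field β̌_k. -/
def betaCheck (Θ : Fam n) (Γ : Conn n) (V : Fam n) (k : Fin n) (q : Pt n) : ℝ :=
  (∑ r, pCov (Gp Γ V) r (Ucheck Θ Γ V) k q * V r q)
  + (∑ r, pdv r (Ucheck Θ Γ V k) q * Qp Θ Γ V r q)
  + (∑ r, pVec (Gp Γ V) k V r q * Ucheck Θ Γ V r q)
  + (∑ r, pCov (Gp Γ V) k (Qp Θ Γ V) r q * Wp V r q)
  - (∑ r, ∑ s, ∑ m, (Rp (Gp Γ V) s r m k q * V m q
      - Dp (Gp Γ V) s m r k q * Qp Θ Γ V m q) * Wp V r q * q.2 s)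

/-- v-representation covector field β_k. -/
def betaV (L : Fam n) (ginv : Fin n → Fin n → Pt n → ℝ) (Γ : Conn n) (Φ : Fam n)
    (k : Fin n) (q : Pt n) : ℝ :=
  (∑ r, q.2 r * vCov Γ r (Uv L ginv Γ Φ) k q)
  + (∑ j, Fvec Γ Φ j q * pdv j (Uv L ginv Γ Φ k) q)
  - (∑ j, ∑ r, ∑ s, vCov Γ k L j q * ginv r j q * q.2 s * vCov Γ s L r q)
  - (∑ j, ∑ r, vCov Γ k L j q * ginv r j q * Fcov L Γ Φ r q)
  + (∑ r, Lup L ginv r q * vCov Γ k (Fcov L Γ Φ) r q)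
  + (∑ m, ∑ r, Lup L ginv r q * q.2 m * vCov2 Γ k (fun m' r' => vCov Γ m' L r') m r q)
  - (∑ j, ∑ r, ∑ s, Lup L ginv r q * vCov Γ k L j q * ginv s j q * pdv s (Fcov L Γ Φ r) q)
  - (∑ j, ∑ m, ∑ r, ∑ s, Lup L ginv r q * vCov Γ k L j q * ginv s j q * q.2 m
      * pdv s (vCov Γ m L r) q)
  - (∑ r, ∑ s, ∑ m, Rv Γ s r m k q * q.2 m * Lup L ginv r q * L s q)
  + (∑ j, ∑ r, ∑ s, ∑ m, ∑ a, ginv a j q * vCov Γ k L j q * Dv Γ s m r a q * q.2 m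
      * Lup L ginv r q * L s q)
  + (∑ r, ∑ s, ∑ m, ∑ a, ginv a m q * Dv Γ s r k a q * Fcov L Γ Φ m q
      * Lup L ginv r q * L s q)

/-- v-representation covector field η_k = β_k − Σ_s U_k α^s L_s / |L|². -/
def etaV (L : Fam n) (ginv : Fin n → Fin n → Pt n → ℝ) (Γ : Conn n) (Φ : Fam n)
    (k : Fin n) (q : Pt n) : ℝ :=
  betaV L ginv Γ Φ k q
    - ∑ s, Uv L ginv Γ Φ k q * alphaV L ginv Γ Φ s q * L s q / L2 L ginv q

/-- p-representation tensor Ǎ^{rs} = ∂W^s/∂p_r. -/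
def Acheck (V : Fam n) (r s : Fin n) (q : Pt n) : ℝ := pdv r (Wp V s) q

/-- v-representation tensor A^{rs} = Σ_q g^{qr} ∂L^s/∂v^q. -/
def Av (L : Fam n) (ginv : Fin n → Fin n → Pt n → ℝ) (r s : Fin n) (q : Pt n) : ℝ :=
  ∑ j, ginv j r q * pdv j (Lup L ginv s) q

/-- p-representation tensor B̌^r_s. -/
def Bcheck (Θ : Fam n) (Γ : Conn n) (V : Fam n) (r s : Fin n) (q : Pt n) : ℝ :=
  pdv r (Ucheck Θ Γ V s) q
  + (∑ m, ∑ k, Wp V k q * q.2 m * Dp (Gp Γ V) m r k s q)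
  - pVec (Gp Γ V) s (Wp V) r q
  + (∑ m, (pdv m (Wp V r) q - pdv r (Wp V m) q) * Ucheck Θ Γ V s q * q.2 m / Omga V q)

/-- v-representation tensor B^r_s. -/
def Bv (L : Fam n) (ginv : Fin n → Fin n → Pt n → ℝ) (Γ : Conn n) (Φ : Fam n)
    (r s : Fin n) (q : Pt n) : ℝ :=
  (∑ j, ginv j r q * pdv j (Uv L ginv Γ Φ s) q)
  + (∑ m, ∑ k, ∑ j, ginv j r q * Lup L ginv k q * L m q * Dv Γ m k s j q)
  - vVec Γ s (Lup L ginv) r q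
  + (∑ j, ∑ k, vCov Γ s L k q * ginv j k q * pdv j (Lup L ginv r) q)
  + (∑ j, ∑ m, (ginv j m q * pdv j (Lup L ginv r) q - ginv j r q * pdv j (Lup L ginv m) q)
      * Uv L ginv Γ Φ s q * L m q / L2 L ginv q)

/-- p-representation tensor Č_{rs}. -/
def Ccheck (Θ : Fam n) (Γ : Conn n) (V : Fam n) (r s : Fin n) (q : Pt n) : ℝ :=
  pCov (Gp Γ V) r (Ucheck Θ Γ V) s q
  - (∑ m, (Ucheck Θ Γ V r q * pdv m (Ucheck Θ Γ V s) q
      + Ucheck Θ Γ V s q * pVec (Gp Γ V) r (Wp V) m q) * q.2 m / Omga V q)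
  - (∑ k, ∑ j, ((∑ m, Dp (Gp Γ V) m j k s q * Ucheck Θ Γ V r q * q.2 m / Omga V q)
      + Rp (Gp Γ V) j k r s q / 2) * Wp V k q * q.2 j)

/-- v-representation tensor C_{rs}. -/
def Cv (L : Fam n) (ginv : Fin n → Fin n → Pt n → ℝ) (Γ : Conn n) (Φ : Fam n)
    (r s : Fin n) (q : Pt n) : ℝ :=
  vCov Γ r (Uv L ginv Γ Φ) s q
  - (∑ j, ∑ k, vCov Γ r L j q * ginv k j q * pdv k (Uv L ginv Γ Φ s) q)
  - (∑ m, Uv L ginv Γ Φ s q * vVec Γ r (Lup L ginv) m q * L m q / L2 L ginv q)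
  - (∑ j, ∑ m, Uv L ginv Γ Φ r q * ginv j m q * pdv j (Uv L ginv Γ Φ s) q * L m q
      / L2 L ginv q)
  + (∑ m, ∑ j, ∑ k, Uv L ginv Γ Φ s q * vCov Γ r L k q * ginv j k q
      * pdv j (Lup L ginv m) q * L m q / L2 L ginv q)
  - (∑ k, ∑ j, ∑ m, ∑ a, ginv a j q * Dv Γ m k s a q * Uv L ginv Γ Φ r q * L m q
      * Lup L ginv k q * L j q / L2 L ginv q)
  - (∑ k, ∑ j, (Rv Γ j k r s q / 2) * Lup L ginv k q * L j q)
  - (∑ k, ∑ j, ∑ m, ∑ a, vCov Γ r L m q * Dv Γ j k s a q * ginv a m q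
      * Lup L ginv k q * L j q)

/-- Gauge-transformed connection Γ' = Γ + T. -/
def addT (Γ T : Conn n) : Conn n := fun k i j q => Γ k i j q + T k i j q

/-- The quantity Ξ_{rs} appearing in the gauge transformation rule for C. -/
def XiG (L : Fam n) (ginv : Fin n → Fin n → Pt n → ℝ) (Γ : Conn n) (Φ : Fam n)
    (T : Conn n) (r s : Fin n) (q : Pt n) : ℝ :=
  (∑ j, ∑ b, ∑ m, T b r j q * L b q * Pv L ginv j m q * Bv L ginv Γ Φ m s q)
  + (∑ j, ∑ b, ∑ m, ∑ a, ∑ c, ∑ e, T b r j q * L b q * Pv L ginv j m q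
      * Av L ginv m a q * Pv L ginv c a q * T e s c q * L e q)

end

/-! Differentiating `V ∘ λ = pr₂` identifies the fibre Jacobian `∂V^s/∂p_b` at `λ(x,v)` with
`g^{sb}(x,v)` and gives `∂V^s/∂x^i = -Σ_b ∂L_b/∂x^i g^{sb}`. Substituting these into the
p-representation derivative of `V^s`, and contracting `∇_i L_j` with `g^{sj}` (which turns the
term `v^a Γ^b_{ai} g_{jb}` into `v^a Γ^s_{ai}`), both sides become the same three sums once
`Γ^s_{ai} = Γ^s_{ia}`. -/

section LegendreInverse

variable {n : ℕ} {L V : Fam n} {ginv : Fin n → Fin n → Pt n → ℝ} {q : Pt n}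

theorem hasFDerivAt_lam (hL : ∀ i, DifferentiableAt ℝ (L i) q) :
    HasFDerivAt (lam L)
      ((ContinuousLinearMap.fst ℝ (Fin n → ℝ) (Fin n → ℝ)).prod
        (ContinuousLinearMap.pi fun i => fderiv ℝ (L i) q)) q :=
  hasFDerivAt_fst.prodMk (hasFDerivAt_pi'.2 fun i => by simpa using (hL i).hasFDerivAt)

theorem fderiv_apply_zero_eq_sum_pdv (f : Pt n → ℝ) (p : Pt n) (w : Fin n → ℝ) :
    fderiv ℝ f p (0, w) = ∑ b, w b * pdv b f p := by
  have hw : ((0 : Fin n → ℝ), w) = ∑ b, w b • ((0 : Fin n → ℝ), (Pi.single b 1 : Fin n → ℝ)) := by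
    ext j <;> simp [Prod.fst_sum, Prod.snd_sum, Pi.single_apply]
  rw [hw, map_sum]
  simp only [map_smul, smul_eq_mul, pdv]

theorem fderiv_inv_apply_fderiv_lam (hLeft : ∀ q, lamInv V (lam L q) = q)
    (hL : ∀ i, DifferentiableAt ℝ (L i) q) {s : Fin n}
    (hV : DifferentiableAt ℝ (V s) (lam L q)) (dx dv : Fin n → ℝ) :
    fderiv ℝ (V s) (lam L q) (dx, fun b => fderiv ℝ (L b) q (dx, dv)) = dv s := by
  let P : Pt n →L[ℝ] ℝ :=
    (ContinuousLinearMap.proj s).comp (ContinuousLinearMap.snd ℝ (Fin n → ℝ) (Fin n → ℝ))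
  have hcomp : V s ∘ lam L = P := funext fun r => congrFun (congrArg Prod.snd (hLeft r)) s
  have hchain := hV.hasFDerivAt.comp q (hasFDerivAt_lam hL)
  rw [hcomp] at hchain
  simpa [P] using congrArg (· (dx, dv)) (hchain.unique P.hasFDerivAt)

theorem sum_gdn_mul_pdv_inv (hLeft : ∀ q, lamInv V (lam L q) = q)
    (hL : ∀ i, DifferentiableAt ℝ (L i) q) {a : Fin n}
    (hV : DifferentiableAt ℝ (V a) (lam L q)) (k : Fin n) :
    ∑ b, gdn L b k q * pdv b (V a) (lam L q) = kron a k := by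
  have h := fderiv_inv_apply_fderiv_lam hLeft hL hV 0 (Pi.single k 1)
  rw [fderiv_apply_zero_eq_sum_pdv] at h
  exact h.trans (by simp [kron, Pi.single_apply])

theorem pdv_inv_eq_ginv (hLeft : ∀ q, lamInv V (lam L q) = q)
    (hL : ∀ i, DifferentiableAt ℝ (L i) q) (hV : ∀ a, DifferentiableAt ℝ (V a) (lam L q))
    (hginv : ∀ s k, ∑ r, ginv s r q * gdn L r k q = kron s k) (a b : Fin n) :
    pdv b (V a) (lam L q) = ginv a b q := by
  let G : Matrix (Fin n) (Fin n) ℝ := Matrix.of fun r k => gdn L r k q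
  have hJ : (Matrix.of fun a b => pdv b (V a) (lam L q)) * G = 1 := by
    ext a k
    simpa [G, Matrix.mul_apply, Matrix.one_apply, mul_comm, kron] using
      sum_gdn_mul_pdv_inv hLeft hL (hV a) k
  have hI : (Matrix.of fun s r => ginv s r q) * G = 1 := by
    ext s k
    simpa [G, Matrix.mul_apply, Matrix.one_apply, kron] using hginv s k
  have hJI := (Matrix.inv_eq_left_inv hJ).symm.trans (Matrix.inv_eq_left_inv hI)
  exact congrFun (congrFun hJI a) b

theorem pdx_inv_lam (hLeft : ∀ q, lamInv V (lam L q) = q)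
    (hL : ∀ i, DifferentiableAt ℝ (L i) q) (hV : ∀ a, DifferentiableAt ℝ (V a) (lam L q))
    (hginv : ∀ s k, ∑ r, ginv s r q * gdn L r k q = kron s k) (i s : Fin n) :
    pdx i (V s) (lam L q) = -∑ b, pdx i (L b) q * ginv s b q := by
  have h := fderiv_inv_apply_fderiv_lam hLeft hL (hV s) (Pi.single i 1) 0
  have hsplit : ((Pi.single i 1 : Fin n → ℝ), fun b => fderiv ℝ (L b) q (Pi.single i 1, 0))
      = ((Pi.single i 1 : Fin n → ℝ), (0 : Fin n → ℝ)) + (0, fun b => pdx i (L b) q) := by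
    ext <;> simp [pdx]
  rw [hsplit, map_add, fderiv_apply_zero_eq_sum_pdv] at h
  simp only [pdv_inv_eq_ginv hLeft hL hV hginv, Pi.zero_apply] at h
  rw [pdx]
  linarith

theorem pVec_inv_lam (hLeft : ∀ q, lamInv V (lam L q) = q)
    (hL : ∀ i, DifferentiableAt ℝ (L i) q) (hV : ∀ a, DifferentiableAt ℝ (V a) (lam L q))
    (hginv : ∀ s k, ∑ r, ginv s r q * gdn L r k q = kron s k) (Γ : Conn n) (i s : Fin n) :
    pVec (Gp Γ V) i V s (lam L q) =
      -∑ b, pdx i (L b) q * ginv s b q + ∑ a, ∑ b, L a q * Γ a i b q * ginv s b q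
        + ∑ a, Γ s i a q * q.2 a := by
  have hGp : ∀ a b c, Gp Γ V a b c (lam L q) = Γ a b c q := fun a b c => by rw [Gp, hLeft]
  have hVlam : ∀ a, V a (lam L q) = q.2 a := fun a => congrFun (congrArg Prod.snd (hLeft q)) a
  simp only [pVec, pS, hGp, hVlam, pdx_inv_lam hLeft hL hV hginv,
    pdv_inv_eq_ginv hLeft hL hV hginv]
  rfl

theorem sum_vCov_mul_ginv (hginv : ∀ s k, ∑ r, ginv s r q * gdn L r k q = kron s k)
    (Γ : Conn n) (i s : Fin n) :
    ∑ j, vCov Γ i L j q * ginv s j q =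
      ∑ j, pdx i (L j) q * ginv s j q - ∑ a, q.2 a * Γ s a i q
        - ∑ a, ∑ b, L a q * Γ a i b q * ginv s b q := by
  have hcontr : ∀ b, ∑ j, pdv b (L j) q * ginv s j q = kron s b := fun b => by
    rw [← hginv s b]
    exact Finset.sum_congr rfl fun j _ => mul_comm _ _
  have hgeodesic : ∑ j, ∑ a, ∑ b, q.2 a * Γ b a i q * pdv b (L j) q * ginv s j q
      = ∑ a, q.2 a * Γ s a i q := by
    rw [Finset.sum_comm]
    refine Finset.sum_congr rfl fun a _ => ?_
    rw [Finset.sum_comm]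
    simp_rw [mul_assoc, ← Finset.mul_sum, hcontr]
    simp [kron]
  have hconn : ∑ j, ∑ b, Γ b i j q * L b q * ginv s j q
      = ∑ a, ∑ b, L a q * Γ a i b q * ginv s b q := by
    rw [Finset.sum_comm]
    exact Finset.sum_congr rfl fun a _ => Finset.sum_congr rfl fun b _ => by ring
  simp only [vCov, vS, sub_mul, Finset.sum_sub_distrib, Finset.sum_mul]
  rw [hgeodesic, hconn]

end LegendreInverse

theorem stmt2_general
    (n : ℕ)
    (L V : Fam n) (ginv : Fin n → Fin n → Pt n → ℝ)
    (hL : ∀ i, ContDiff ℝ (⊤ : ℕ∞) (L i))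
    (hV : ∀ i, ContDiff ℝ (⊤ : ℕ∞) (V i))
    (hLeft : ∀ q : Pt n, lamInv V (lam L q) = q)
    (hginv : ∀ (q : Pt n) (s k : Fin n), (∑ r, ginv s r q * gdn L r k q) = kron s k)
    (Γ : Conn n)
    (hΓsym : ∀ (k i j : Fin n) (q : Pt n), Γ k i j q = Γ k j i q) :
    ∀ (q : Pt n) (i s : Fin n),
      pVec (Gp Γ V) i V s (lam L q) = -∑ j, vCov Γ i L j q * ginv s j q := by
  intro q i s
  have hLd : ∀ i, DifferentiableAt ℝ (L i) q := fun i => (hL i).differentiable (by simp) q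
  have hVd : ∀ a, DifferentiableAt ℝ (V a) (lam L q) :=
    fun a => (hV a).differentiable (by simp) _
  have hsym : ∑ a, q.2 a * Γ s a i q = ∑ a, Γ s i a q * q.2 a :=
    Finset.sum_congr rfl fun a _ => by rw [hΓsym, mul_comm]
  rw [pVec_inv_lam hLeft hLd hVd (hginv q), sum_vCov_mul_ginv (hginv q), hsym]
  ring

theorem stmt2
    (n : ℕ) (hn : 2 ≤ n)
    (L V : Fam n) (ginv : Fin n → Fin n → Pt n → ℝ)
    (hL : ∀ i, ContDiff ℝ (⊤ : ℕ∞) (L i))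
    (hV : ∀ i, ContDiff ℝ (⊤ : ℕ∞) (V i))
    (hginvSm : ∀ i j, ContDiff ℝ (⊤ : ℕ∞) (ginv i j))
    (hLeft : ∀ q : Pt n, lamInv V (lam L q) = q)
    (hRight : ∀ q : Pt n, lam L (lamInv V q) = q)
    (hginv : ∀ (q : Pt n) (s k : Fin n), (∑ r, ginv s r q * gdn L r k q) = kron s k)
    (Γ : Conn n)
    (hΓ : ∀ k i j, ContDiff ℝ (⊤ : ℕ∞) (Γ k i j))
    (hΓsym : ∀ (k i j : Fin n) (q : Pt n), Γ k i j q = Γ k j i q) :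
    ∀ (q : Pt n) (i s : Fin n),
      pVec (Gp Γ V) i V s (lam L q) = -∑ j, vCov Γ i L j q * ginv s j q :=
  stmt2_general n L V ginv hL hV hLeft hginv Γ hΓsym
end

section
/- For all i and every point (x,v): Q_i(x, L(x,v)) = Σ_q v^q (∇_q L_i)(x,v) + F_i(x,v), i.e. the p-representation force covector composed with λ equals Σ_q v^q ∇_q L_i + F_i. -/
theorem stmt3
    (n : ℕ) (hn : 2 ≤ n)
    (L V : Fam n) (ginv : Fin n → Fin n → Pt n → ℝ)
    (hL : ∀ i, ContDiff ℝ (⊤ : ℕ∞) (L i))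
    (hV : ∀ i, ContDiff ℝ (⊤ : ℕ∞) (V i))
    (hginvSm : ∀ i j, ContDiff ℝ (⊤ : ℕ∞) (ginv i j))
    (hLeft : ∀ q : Pt n, lamInv V (lam L q) = q)
    (hRight : ∀ q : Pt n, lam L (lamInv V q) = q)
    (hginv : ∀ (q : Pt n) (s k : Fin n), (∑ r, ginv s r q * gdn L r k q) = kron s k)
    (Γ : Conn n)
    (hΓ : ∀ k i j, ContDiff ℝ (⊤ : ℕ∞) (Γ k i j))
    (hΓsym : ∀ (k i j : Fin n) (q : Pt n), Γ k i j q = Γ k j i q)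
    (Φ : Fam n) (hΦ : ∀ i, ContDiff ℝ (⊤ : ℕ∞) (Φ i))
    (Θ : Fam n) (hΘ : ∀ i, ContDiff ℝ (⊤ : ℕ∞) (Θ i))
    (hΘdef : ∀ (q : Pt n) (i : Fin n),
      Θ i (lam L q) = (∑ s, pdx s (L i) q * q.2 s) + (∑ s, pdv s (L i) q * Φ s q)) :
    ∀ (q : Pt n) (i : Fin n),
      Qp Θ Γ V i (lam L q) = (∑ j, q.2 j * vCov Γ j L i q) + Fcov L Γ Φ i q := by

  intro q i
  have hInv : lamInv V (lam L q) = q := hLeft q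
  have hVq : ∀ j, V j (lam L q) = q.2 j := by
    intro j
    have := congrArg Prod.snd hInv
    exact congrFun this j
  have hlam2 : ∀ k, (lam L q).2 k = L k q := fun k => rfl
  simp only [Qp, Gp, hInv, hVq, hlam2, hΘdef]
  simp only [vCov, vS, Fcov, Fvec, gdn, mul_sub, mul_add, Finset.mul_sum,
    Finset.sum_sub_distrib, Finset.sum_add_distrib]
  have e1 : (∑ s, pdx s (L i) q * q.2 s) = ∑ j, q.2 j * pdx j (L i) q := by
    apply Finset.sum_congr rfl; intro j _; ring
  have e3 : (∑ j, ∑ k, Γ k i j q * q.2 j * L k q)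
      = ∑ j, ∑ b, q.2 j * (Γ b j i q * L b q) := by
    apply Finset.sum_congr rfl; intro j _
    apply Finset.sum_congr rfl; intro k _
    rw [hΓsym k i j]; ring
  have e4 : (∑ j, ∑ a, ∑ b, pdv j (L i) q * (Γ j a b q * q.2 a * q.2 b))
      = ∑ j, ∑ a, ∑ b, q.2 j * (q.2 a * Γ b a j q * pdv b (L i) q) := by
    rw [Finset.sum_comm]
    apply Finset.sum_congr rfl; intro a _
    rw [Finset.sum_comm]
    apply Finset.sum_congr rfl; intro b _
    apply Finset.sum_congr rfl; intro j _
    rw [hΓsym j a b]; ring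
  rw [e1, e3, e4]
  ring
end

section
/- Define in p-representation α̌^k = Σ_r (∂V^r/∂p_k) Ǔ_r + Σ_r (∇_r W^k) V^r + Σ_r (∂W^k/∂p_r) Q_r + Σ_r W^r (∂Q_r/∂p_k) − Σ_{r,s,q} p_s Ď^{sk}_{rq} W^r V^q. Then for every point (x,v) and all k: α̌^k(x, L(x,v)) = α^k(x,v), where α^k is the v-representation expression given in the context. -/
/-! Everything is pulled back along `λ`. Since `λ⁻¹ ∘ λ = id`, the chain rule turns every
`p`-derivative at `λ(x,v)` into `v`-derivatives of the pullback contracted with `g⁻¹`; in particular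
`∂V^s/∂p_b ∘ λ = g^{sb}`, so `W^k ∘ λ = L^k`, `Q ∘ λ = vˢ ∇_s L + F` and `Ǔ ∘ λ = U`. Horizontal
derivatives transform as `∇̌_m f ∘ λ = ∇_m (f ∘ λ) - (∇_m L_c) (∂f/∂p_c ∘ λ)`. The correction
terms this creates in `∇̌_r W^k` cancel against the velocity part of `Q`, and each remaining term
of `α̌` becomes a group of terms of `α`. -/

variable {n : ℕ}

lemma sum_sum_sum_comm {ι κ μ α : Type*} [AddCommMonoid α] (s : Finset ι) (t : Finset κ)
    (u : Finset μ) (f : ι → κ → μ → α) :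
    ∑ a ∈ s, ∑ b ∈ t, ∑ c ∈ u, f a b c = ∑ c ∈ u, ∑ a ∈ s, ∑ b ∈ t, f a b c := by
  calc ∑ a ∈ s, ∑ b ∈ t, ∑ c ∈ u, f a b c = ∑ a ∈ s, ∑ c ∈ u, ∑ b ∈ t, f a b c :=
        Finset.sum_congr rfl fun _ _ => Finset.sum_comm
    _ = ∑ c ∈ u, ∑ a ∈ s, ∑ b ∈ t, f a b c := Finset.sum_comm

lemma sum_sum_sum_sum_comm {ι κ μ ν α : Type*} [AddCommMonoid α] (s : Finset ι) (t : Finset κ)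
    (u : Finset μ) (v : Finset ν) (f : ι → κ → μ → ν → α) :
    ∑ a ∈ s, ∑ b ∈ t, ∑ c ∈ u, ∑ d ∈ v, f a b c d
      = ∑ c ∈ u, ∑ d ∈ v, ∑ a ∈ s, ∑ b ∈ t, f a b c d := by
  rw [sum_sum_sum_comm]
  exact Finset.sum_congr rfl fun _ _ => sum_sum_sum_comm _ _ _ _

section Calculus

variable {f g : Pt n → ℝ} {q : Pt n}

@[fun_prop]
lemma contDiff_pdv (m : Fin n) (hf : ContDiff ℝ (⊤ : ℕ∞) f) :
    ContDiff ℝ (⊤ : ℕ∞) (pdv m f) :=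
  (ContinuousLinearMap.apply ℝ ℝ ((0, Pi.single m 1) : Pt n)).contDiff.comp
    (contDiff_infty_iff_fderiv.mp hf).2

@[fun_prop]
lemma contDiff_pdx (m : Fin n) (hf : ContDiff ℝ (⊤ : ℕ∞) f) :
    ContDiff ℝ (⊤ : ℕ∞) (pdx m f) :=
  (ContinuousLinearMap.apply ℝ ℝ ((Pi.single m 1, 0) : Pt n)).contDiff.comp
    (contDiff_infty_iff_fderiv.mp hf).2

lemma pdv_add (hf : DifferentiableAt ℝ f q) (hg : DifferentiableAt ℝ g q) (m : Fin n) :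
    pdv m (fun p => f p + g p) q = pdv m f q + pdv m g q := by
  simp [pdv, fderiv_fun_add hf hg]

lemma pdv_mul (hf : DifferentiableAt ℝ f q) (hg : DifferentiableAt ℝ g q) (m : Fin n) :
    pdv m (fun p => f p * g p) q = pdv m f q * g q + f q * pdv m g q := by
  simp [pdv, fderiv_fun_mul hf hg]
  ring

lemma pdv_sum {ι : Type*} (s : Finset ι) {F : ι → Pt n → ℝ}
    (hF : ∀ i ∈ s, DifferentiableAt ℝ (F i) q) (m : Fin n) :
    pdv m (fun p => ∑ i ∈ s, F i p) q = ∑ i ∈ s, pdv m (F i) q := by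
  simp [pdv, fderiv_fun_sum hF]

lemma fderiv_snd_apply (s : Fin n) (w : Pt n) :
    fderiv ℝ (fun p : Pt n => p.2 s) q w = w.2 s := by
  have : (fun p : Pt n => p.2 s) =
      (ContinuousLinearMap.proj s).comp (ContinuousLinearMap.snd ℝ (Fin n → ℝ) (Fin n → ℝ)) := rfl
  simp [this, ContinuousLinearMap.fderiv]

lemma pdv_snd_apply (m s : Fin n) : pdv m (fun p : Pt n => p.2 s) q = kron s m := by
  simp [pdv, fderiv_snd_apply, kron, Pi.single_apply]

lemma pdx_snd_apply (m s : Fin n) : pdx m (fun p : Pt n => p.2 s) q = 0 := by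
  simp [pdx, fderiv_snd_apply]

lemma ContinuousLinearMap.apply_mk_eq_add_sum (ℓ : Pt n →L[ℝ] ℝ) (a u : Fin n → ℝ) :
    ℓ (a, u) = ℓ (a, 0) + ∑ b, u b * ℓ (0, Pi.single b 1) := by
  have hu : ((a, u) : Pt n) = (a, 0) + ∑ b, u b • ((0, Pi.single b 1) : Pt n) := by
    ext i
    · simp [Prod.fst_sum]
    · simp [Prod.snd_sum, Finset.sum_apply, Pi.single_apply]
  rw [hu, map_add, map_sum]
  simp only [map_smul, smul_eq_mul]

lemma fderiv_comp_lam_apply {Y : Fam n} (hY : ∀ i, DifferentiableAt ℝ (Y i) q)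
    (hf : DifferentiableAt ℝ f (lam Y q)) (w : Pt n) :
    fderiv ℝ (fun p => f (lam Y p)) q w
      = fderiv ℝ f (lam Y q) (w.1, fun i => fderiv ℝ (Y i) q w) := by
  have hlam : HasFDerivAt (lam Y) ((ContinuousLinearMap.fst ℝ (Fin n → ℝ) (Fin n → ℝ)).prod
      (ContinuousLinearMap.pi fun i => fderiv ℝ (Y i) q)) q :=
    hasFDerivAt_fst.prodMk (hasFDerivAt_pi.2 fun i => (hY i).hasFDerivAt)
  exact congrArg (· w) (hf.hasFDerivAt.comp q hlam).fderiv

lemma pdv_comp_lam {Y : Fam n} (hY : ∀ i, DifferentiableAt ℝ (Y i) q)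
    (hf : DifferentiableAt ℝ f (lam Y q)) (m : Fin n) :
    pdv m (fun p => f (lam Y p)) q = ∑ b, pdv b f (lam Y q) * pdv m (Y b) q := by
  rw [pdv, fderiv_comp_lam_apply hY hf, ContinuousLinearMap.apply_mk_eq_add_sum]
  simp [pdv, mul_comm, show ((0, 0) : Pt n) = 0 from rfl]

lemma pdx_comp_lam {Y : Fam n} (hY : ∀ i, DifferentiableAt ℝ (Y i) q)
    (hf : DifferentiableAt ℝ f (lam Y q)) (m : Fin n) :
    pdx m (fun p => f (lam Y p)) q
      = pdx m f (lam Y q) + ∑ b, pdx m (Y b) q * pdv b f (lam Y q) := by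
  rw [pdx, fderiv_comp_lam_apply hY hf, ContinuousLinearMap.apply_mk_eq_add_sum]
  rfl

end Calculus

section Smoothness

variable {L V Θ Φ : Fam n} {Γ : Conn n}

lemma contDiff_Wp (hV : ∀ i, ContDiff ℝ (⊤ : ℕ∞) (V i)) (k : Fin n) :
    ContDiff ℝ (⊤ : ℕ∞) (Wp V k) := by
  unfold Wp; fun_prop

lemma contDiff_vCov (hL : ∀ i, ContDiff ℝ (⊤ : ℕ∞) (L i))
    (hΓ : ∀ k i j, ContDiff ℝ (⊤ : ℕ∞) (Γ k i j)) (m r : Fin n) :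
    ContDiff ℝ (⊤ : ℕ∞) (vCov Γ m L r) := by
  unfold vCov vS; fun_prop

lemma contDiff_Fcov (hL : ∀ i, ContDiff ℝ (⊤ : ℕ∞) (L i))
    (hΓ : ∀ k i j, ContDiff ℝ (⊤ : ℕ∞) (Γ k i j)) (hΦ : ∀ i, ContDiff ℝ (⊤ : ℕ∞) (Φ i))
    (r : Fin n) : ContDiff ℝ (⊤ : ℕ∞) (Fcov L Γ Φ r) := by
  unfold Fcov Fvec gdn; fun_prop

lemma contDiff_Qp (hV : ∀ i, ContDiff ℝ (⊤ : ℕ∞) (V i))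
    (hΓ : ∀ k i j, ContDiff ℝ (⊤ : ℕ∞) (Γ k i j)) (hΘ : ∀ i, ContDiff ℝ (⊤ : ℕ∞) (Θ i))
    (r : Fin n) : ContDiff ℝ (⊤ : ℕ∞) (Qp Θ Γ V r) := by
  unfold Qp Gp lamInv; fun_prop

end Smoothness

section LegendreAlgebra

variable {L V : Fam n} {ginv : Fin n → Fin n → Pt n → ℝ} {Γ : Conn n}

lemma sum_gdn_mul_ginv (hginv : ∀ q s k, ∑ r, ginv s r q * gdn L r k q = kron s k)
    (q : Pt n) (s k : Fin n) : ∑ r, gdn L s r q * ginv r k q = kron s k := by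
  have hmul : (Matrix.of fun s r => ginv s r q) * (Matrix.of fun r k => gdn L r k q) = 1 := by
    ext i j
    simp [Matrix.mul_apply, hginv, kron, Matrix.one_apply]
  have := Matrix.ext_iff.mpr (mul_eq_one_comm.mp hmul) s k
  simpa [Matrix.mul_apply, Matrix.one_apply, kron] using this

lemma sum_ginv_mul_Fcov {Φ : Fam n} (hginv : ∀ q s k, ∑ r, ginv s r q * gdn L r k q = kron s k)
    (q : Pt n) (m : Fin n) : ∑ r, ginv m r q * Fcov L Γ Φ r q = Fvec Γ Φ m q := by
  simp only [Fcov, Finset.mul_sum, ← mul_assoc]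
  rw [Finset.sum_comm]
  simp [← Finset.sum_mul, hginv, kron]

lemma lam_snd_apply (q : Pt n) (k : Fin n) : (lam L q).2 k = L k q := rfl

variable (hLeft : ∀ q, lamInv V (lam L q) = q)
include hLeft

lemma V_lam (q : Pt n) (s : Fin n) : V s (lam L q) = q.2 s :=
  congrFun (congrArg Prod.snd (hLeft q)) s

lemma Gp_lam (q : Pt n) (k i j : Fin n) : Gp Γ V k i j (lam L q) = Γ k i j q := by
  rw [Gp, hLeft]

lemma Qp_lam {Θ Φ : Fam n} (hΓsym : ∀ k i j q, Γ k i j q = Γ k j i q)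
    (hΘdef : ∀ q i, Θ i (lam L q) = ∑ s, pdx s (L i) q * q.2 s + ∑ s, pdv s (L i) q * Φ s q)
    (q : Pt n) (i : Fin n) :
    Qp Θ Γ V i (lam L q) = ∑ s, q.2 s * vCov Γ s L i q + Fcov L Γ Φ i q := by
  simp only [Qp, vCov, vS, Fcov, Fvec, gdn, hΘdef, Gp_lam hLeft, V_lam hLeft, lam_snd_apply,
    mul_sub, mul_add, Finset.sum_sub_distrib, Finset.sum_add_distrib]
  have hquad : ∑ s, q.2 s * ∑ a, ∑ b, q.2 a * Γ b a s q * pdv b (L i) q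
      = ∑ b, pdv b (L i) q * ∑ a, ∑ s, Γ b a s q * q.2 a * q.2 s := by
    simp only [Finset.mul_sum]
    rw [sum_sum_sum_comm]
    exact Finset.sum_congr rfl fun b _ => by
      rw [Finset.sum_comm]; exact Finset.sum_congr rfl fun a _ =>
        Finset.sum_congr rfl fun s _ => by ring
  have hconn : ∑ s, q.2 s * ∑ b, Γ b s i q * L b q = ∑ s, ∑ b, Γ b i s q * q.2 s * L b q := by
    simp only [Finset.mul_sum, hΓsym _ _ i]
    exact Finset.sum_congr rfl fun s _ => Finset.sum_congr rfl fun b _ => by ring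
  rw [hquad, hconn]
  simp only [mul_comm (pdx _ _ _)]
  ring

end LegendreAlgebra

section LegendreCalculus

variable {L V : Fam n} {ginv : Fin n → Fin n → Pt n → ℝ} {Γ : Conn n}
  (hL : ∀ i, ContDiff ℝ (⊤ : ℕ∞) (L i))
include hL

lemma pdv_lam_eq_sum (hginv : ∀ q s k, ∑ r, ginv s r q * gdn L r k q = kron s k)
    {f h : Pt n → ℝ} (q : Pt n) (hf : DifferentiableAt ℝ f (lam L q))
    (hfh : ∀ p, f (lam L p) = h p) (c : Fin n) :
    pdv c f (lam L q) = ∑ m, pdv m h q * ginv m c q := by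
  have hchain : ∀ m, pdv m h q = ∑ b, pdv b f (lam L q) * gdn L b m q := by
    intro m
    rw [← funext hfh, pdv_comp_lam (fun i => (hL i).differentiable (by simp) q) hf]
    rfl
  simp only [hchain, Finset.sum_mul, mul_assoc]
  rw [Finset.sum_comm]
  simp [← Finset.mul_sum, sum_gdn_mul_ginv hginv, kron]

variable (hLeft : ∀ q, lamInv V (lam L q) = q)

include hLeft in
lemma pS_lam {f : Pt n → ℝ} (q : Pt n) (hf : DifferentiableAt ℝ f (lam L q)) (m : Fin n) :
    pS (Gp Γ V) m f (lam L q)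
      = vS Γ m (fun p => f (lam L p)) q - ∑ c, vCov Γ m L c q * pdv c f (lam L q) := by
  have hL' : ∀ i, DifferentiableAt ℝ (L i) q := fun i => (hL i).differentiable (by simp) q
  have hreorder : ∑ a, ∑ b, q.2 a * Γ b a m q * ∑ c, pdv c f (lam L q) * pdv b (L c) q
      = ∑ c, (∑ a, ∑ b, q.2 a * Γ b a m q * pdv b (L c) q) * pdv c f (lam L q) := by
    simp only [Finset.mul_sum, Finset.sum_mul]
    rw [sum_sum_sum_comm]
    exact Finset.sum_congr rfl fun c _ => Finset.sum_congr rfl fun a _ =>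
      Finset.sum_congr rfl fun b _ => by ring
  have hrename : ∑ a, ∑ b, L a q * Γ a m b q * pdv b f (lam L q)
      = ∑ c, (∑ b, Γ b m c q * L b q) * pdv c f (lam L q) := by
    rw [Finset.sum_comm]
    simp only [Finset.sum_mul]
    exact Finset.sum_congr rfl fun c _ => Finset.sum_congr rfl fun b _ => by ring
  simp only [pS, vS, vCov, pdx_comp_lam hL' hf, pdv_comp_lam hL' hf, Gp_lam hLeft,
    lam_snd_apply, hreorder, hrename, sub_mul, Finset.sum_sub_distrib]
  ring

variable (hginv : ∀ q s k, ∑ r, ginv s r q * gdn L r k q = kron s k)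
  (hV : ∀ i, ContDiff ℝ (⊤ : ℕ∞) (V i))
include hLeft hginv hV

lemma pdv_V_lam (q : Pt n) (s b : Fin n) : pdv b (V s) (lam L q) = ginv s b q := by
  rw [pdv_lam_eq_sum hL hginv q ((hV s).differentiable (by simp) _) (fun p => V_lam hLeft p s)]
  simp [pdv_snd_apply, kron]

lemma Wp_lam (q : Pt n) (i : Fin n) : Wp V i (lam L q) = Lup L ginv i q := by
  simp [Wp, Lup, lam_snd_apply, pdv_V_lam hL hLeft hginv hV]

lemma pdv_Wp_lam (q : Pt n) (k c : Fin n) :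
    pdv c (Wp V k) (lam L q) = ∑ m, pdv m (Lup L ginv k) q * ginv m c q :=
  pdv_lam_eq_sum hL hginv q ((contDiff_Wp hV k).differentiable (by simp) _)
    (fun p => Wp_lam hL hLeft hginv hV p k) c

lemma pVec_Wp_lam (q : Pt n) (r k : Fin n) :
    pVec (Gp Γ V) r (Wp V) k (lam L q)
      = vVec Γ r (Lup L ginv) k q - ∑ c, vCov Γ r L c q * pdv c (Wp V k) (lam L q) := by
  have hpull : (fun p => Wp V k (lam L p)) = Lup L ginv k :=
    funext fun p => Wp_lam hL hLeft hginv hV p k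
  rw [pVec, vVec, pS_lam hL hLeft q ((contDiff_Wp hV k).differentiable (by simp) _), hpull]
  simp only [Gp_lam hLeft, Wp_lam hL hLeft hginv hV]
  ring

variable (hΓsym : ∀ k i j q, Γ k i j q = Γ k j i q)
include hΓsym

lemma pVec_V_lam (q : Pt n) (i s : Fin n) :
    pVec (Gp Γ V) i V s (lam L q) = -∑ c, ginv s c q * vCov Γ i L c q := by
  have hpull : (fun p => V s (lam L p)) = fun p => p.2 s := funext fun p => V_lam hLeft p s
  have hvS : vS Γ i (fun p : Pt n => p.2 s) q = -∑ a, Γ s i a q * q.2 a := by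
    simp [vS, pdx_snd_apply, pdv_snd_apply, kron, hΓsym s _ i, mul_comm]
  rw [pVec, pS_lam hL hLeft q ((hV s).differentiable (by simp) _), hpull, hvS]
  simp only [Gp_lam hLeft, V_lam hLeft, pdv_V_lam hL hLeft hginv hV, mul_comm]
  ring

lemma Ucheck_lam {Θ Φ : Fam n}
    (hΘdef : ∀ q i, Θ i (lam L q) = ∑ s, pdx s (L i) q * q.2 s + ∑ s, pdv s (L i) q * Φ s q)
    (q : Pt n) (i : Fin n) :
    Ucheck Θ Γ V i (lam L q) = Uv L ginv Γ Φ i q := by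
  have hcontract : ∑ s, (-∑ c, ginv s c q * vCov Γ i L c q) * L s q
      = -∑ c, Lup L ginv c q * vCov Γ i L c q := by
    simp only [Lup, neg_mul, Finset.sum_neg_distrib, Finset.sum_mul]
    rw [Finset.sum_comm]
    exact congrArg _ (Finset.sum_congr rfl fun c _ => Finset.sum_congr rfl fun s _ => by ring)
  rw [Ucheck, Uv, Qp_lam hLeft hΓsym hΘdef]
  simp only [pVec_V_lam hL hLeft hginv hV hΓsym, lam_snd_apply, hcontract]
  ring

lemma sum_pdv_V_mul_Ucheck_lam {Θ Φ : Fam n}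
    (hΘdef : ∀ q i, Θ i (lam L q) = ∑ s, pdx s (L i) q * q.2 s + ∑ s, pdv s (L i) q * Φ s q)
    (q : Pt n) (k : Fin n) :
    ∑ r, pdv k (V r) (lam L q) * Ucheck Θ Γ V r (lam L q)
      = ∑ r, ginv r k q * Uv L ginv Γ Φ r q := by
  simp only [pdv_V_lam hL hLeft hginv hV, Ucheck_lam hL hLeft hginv hV hΓsym hΘdef]
lemma sum_pVec_Wp_mul_V_add_sum_pdv_Wp_mul_Qp_lam {Θ Φ : Fam n}
    (hΘdef : ∀ q i, Θ i (lam L q) = ∑ s, pdx s (L i) q * q.2 s + ∑ s, pdv s (L i) q * Φ s q)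
    (q : Pt n) (k : Fin n) :
    ∑ r, pVec (Gp Γ V) r (Wp V) k (lam L q) * V r (lam L q)
        + ∑ r, pdv r (Wp V k) (lam L q) * Qp Θ Γ V r (lam L q)
      = ∑ r, q.2 r * vVec Γ r (Lup L ginv) k q + ∑ j, Fvec Γ Φ j q * pdv j (Lup L ginv k) q := by
  have hcancel : ∑ r, (∑ c, vCov Γ r L c q * pdv c (Wp V k) (lam L q)) * q.2 r
      = ∑ r, pdv r (Wp V k) (lam L q) * ∑ s, vCov Γ s L r q * q.2 s := by
    simp only [Finset.sum_mul, Finset.mul_sum]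
    rw [Finset.sum_comm]
    exact Finset.sum_congr rfl fun c _ => Finset.sum_congr rfl fun r _ => by ring
  have hforce : ∑ r, pdv r (Wp V k) (lam L q) * Fcov L Γ Φ r q
      = ∑ j, Fvec Γ Φ j q * pdv j (Lup L ginv k) q := by
    simp only [pdv_Wp_lam hL hLeft hginv hV, Finset.sum_mul, mul_assoc]
    rw [Finset.sum_comm]
    simp only [← Finset.mul_sum, sum_ginv_mul_Fcov hginv, mul_comm]
  simp only [pVec_Wp_lam hL hLeft hginv hV, V_lam hLeft, Qp_lam hLeft hΓsym hΘdef]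
  simp only [sub_mul, mul_add, Finset.sum_sub_distrib, Finset.sum_add_distrib, mul_comm (q.2 _)]
  rw [hcancel, hforce]
  ring

variable (hΓ : ∀ k i j, ContDiff ℝ (⊤ : ℕ∞) (Γ k i j))
include hΓ

lemma Dp_Gp_lam (q : Pt n) (s k r j : Fin n) :
    Dp (Gp Γ V) s k r j (lam L q) = ∑ m, ginv m k q * Dv Γ s r j m q := by
  have hGp : ContDiff ℝ (⊤ : ℕ∞) (Gp Γ V s r j) := by unfold Gp lamInv; fun_prop
  rw [Dp, pdv_lam_eq_sum hL hginv q (hGp.differentiable (by simp) _) (Gp_lam hLeft · s r j),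
    ← Finset.sum_neg_distrib]
  simp only [Dv, funext (hΓsym s j r)]
  exact Finset.sum_congr rfl fun m _ => by ring

lemma pdv_Qp_lam {Θ Φ : Fam n} (hΦ : ∀ i, ContDiff ℝ (⊤ : ℕ∞) (Φ i))
    (hΘ : ∀ i, ContDiff ℝ (⊤ : ℕ∞) (Θ i))
    (hΘdef : ∀ q i, Θ i (lam L q) = ∑ s, pdx s (L i) q * q.2 s + ∑ s, pdv s (L i) q * Φ s q)
    (q : Pt n) (r c : Fin n) :
    pdv c (Qp Θ Γ V r) (lam L q)
      = ∑ j, (vCov Γ j L r q + ∑ s, q.2 s * pdv j (vCov Γ s L r) q + pdv j (Fcov L Γ Φ r) q)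
          * ginv j c q := by
  rw [pdv_lam_eq_sum hL hginv q ((contDiff_Qp hV hΓ hΘ r).differentiable (by simp) _)
    (Qp_lam hLeft hΓsym hΘdef · r)]
  refine Finset.sum_congr rfl fun j _ => congrArg (· * _) ?_
  have hsnd : ∀ s, DifferentiableAt ℝ (fun p : Pt n => p.2 s) q := fun s => by fun_prop
  have hvCov : ∀ s, DifferentiableAt ℝ (vCov Γ s L r) q :=
    fun s => (contDiff_vCov hL hΓ s r).differentiable (by simp) q
  have hsum : DifferentiableAt ℝ (fun p => ∑ s, p.2 s * vCov Γ s L r p) q :=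
    DifferentiableAt.fun_sum fun s _ => (hsnd s).mul (hvCov s)
  rw [pdv_add hsum ((contDiff_Fcov hL hΓ hΦ r).differentiable (by simp) q),
    pdv_sum (F := fun s p => p.2 s * vCov Γ s L r p) _ fun s _ => (hsnd s).mul (hvCov s)]
  simp [pdv_mul (hsnd _) (hvCov _), pdv_snd_apply, Finset.sum_add_distrib, kron]

lemma sum_Wp_mul_pdv_Qp_lam {Θ Φ : Fam n} (hΦ : ∀ i, ContDiff ℝ (⊤ : ℕ∞) (Φ i))
    (hΘ : ∀ i, ContDiff ℝ (⊤ : ℕ∞) (Θ i))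
    (hΘdef : ∀ q i, Θ i (lam L q) = ∑ s, pdx s (L i) q * q.2 s + ∑ s, pdv s (L i) q * Φ s q)
    (q : Pt n) (k : Fin n) :
    ∑ r, Wp V r (lam L q) * pdv k (Qp Θ Γ V r) (lam L q)
      = ∑ j, ∑ r, ∑ s, Lup L ginv r q * ginv j k q * q.2 s * pdv j (vCov Γ s L r) q
        + ∑ j, ∑ r, Lup L ginv r q * ginv j k q * pdv j (Fcov L Γ Φ r) q
        + ∑ j, ∑ r, Lup L ginv r q * ginv j k q * vCov Γ j L r q := by
  simp only [Wp_lam hL hLeft hginv hV, pdv_Qp_lam hL hLeft hginv hV hΓsym hΓ hΦ hΘ hΘdef,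
    Finset.mul_sum, add_mul, mul_add, Finset.sum_mul, Finset.sum_add_distrib]
  have hcov : ∑ r, ∑ j, Lup L ginv r q * (vCov Γ j L r q * ginv j k q)
      = ∑ j, ∑ r, Lup L ginv r q * ginv j k q * vCov Γ j L r q := by
    rw [Finset.sum_comm]
    exact Finset.sum_congr rfl fun j _ => Finset.sum_congr rfl fun r _ => by ring
  have hderiv : ∑ r, ∑ j, ∑ s, Lup L ginv r q * (q.2 s * pdv j (vCov Γ s L r) q * ginv j k q)
      = ∑ j, ∑ r, ∑ s, Lup L ginv r q * ginv j k q * q.2 s * pdv j (vCov Γ s L r) q := by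
    rw [Finset.sum_comm]
    exact Finset.sum_congr rfl fun j _ => Finset.sum_congr rfl fun r _ =>
      Finset.sum_congr rfl fun s _ => by ring
  have hforce : ∑ r, ∑ j, Lup L ginv r q * (pdv j (Fcov L Γ Φ r) q * ginv j k q)
      = ∑ j, ∑ r, Lup L ginv r q * ginv j k q * pdv j (Fcov L Γ Φ r) q := by
    rw [Finset.sum_comm]
    exact Finset.sum_congr rfl fun j _ => Finset.sum_congr rfl fun r _ => by ring
  rw [hcov, hderiv, hforce]
  ring

lemma sum_Dp_Gp_lam (q : Pt n) (k : Fin n) :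
    ∑ r, ∑ s, ∑ j, (lam L q).2 s * Dp (Gp Γ V) s k r j (lam L q) * Wp V r (lam L q)
        * V j (lam L q)
      = ∑ j, ∑ m, ∑ r, ∑ s, ginv m k q * L s q * Dv Γ s r j m q * Lup L ginv r q * q.2 j := by
  simp only [lam_snd_apply, Dp_Gp_lam hL hLeft hginv hV hΓsym hΓ, Wp_lam hL hLeft hginv hV,
    V_lam hLeft, Finset.mul_sum, Finset.sum_mul]
  rw [sum_sum_sum_sum_comm]
  exact Finset.sum_congr rfl fun j _ => Finset.sum_congr rfl fun m _ =>
    Finset.sum_congr rfl fun r _ => Finset.sum_congr rfl fun s _ => by ring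

end LegendreCalculus

theorem stmt6_general
    (n : ℕ)
    (L V : Fam n) (ginv : Fin n → Fin n → Pt n → ℝ)
    (hL : ∀ i, ContDiff ℝ (⊤ : ℕ∞) (L i))
    (hV : ∀ i, ContDiff ℝ (⊤ : ℕ∞) (V i))
    (hLeft : ∀ q : Pt n, lamInv V (lam L q) = q)
    (hginv : ∀ (q : Pt n) (s k : Fin n), (∑ r, ginv s r q * gdn L r k q) = kron s k)
    (Γ : Conn n)
    (hΓ : ∀ k i j, ContDiff ℝ (⊤ : ℕ∞) (Γ k i j))
    (hΓsym : ∀ (k i j : Fin n) (q : Pt n), Γ k i j q = Γ k j i q)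
    (Φ : Fam n) (hΦ : ∀ i, ContDiff ℝ (⊤ : ℕ∞) (Φ i))
    (Θ : Fam n) (hΘ : ∀ i, ContDiff ℝ (⊤ : ℕ∞) (Θ i))
    (hΘdef : ∀ (q : Pt n) (i : Fin n),
      Θ i (lam L q) = (∑ s, pdx s (L i) q * q.2 s) + (∑ s, pdv s (L i) q * Φ s q)) :
    ∀ (q : Pt n) (k : Fin n),
      alphaCheck Θ Γ V k (lam L q) = alphaV L ginv Γ Φ k q := by
  intro q k
  unfold alphaCheck alphaV
  linear_combination sum_pdv_V_mul_Ucheck_lam hL hLeft hginv hV hΓsym hΘdef q k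
    + sum_pVec_Wp_mul_V_add_sum_pdv_Wp_mul_Qp_lam hL hLeft hginv hV hΓsym hΘdef q k
    + sum_Wp_mul_pdv_Qp_lam hL hLeft hginv hV hΓsym hΓ hΦ hΘ hΘdef q k
    - sum_Dp_Gp_lam hL hLeft hginv hV hΓsym hΓ q k

theorem stmt6
    (n : ℕ) (hn : 2 ≤ n)
    (L V : Fam n) (ginv : Fin n → Fin n → Pt n → ℝ)
    (hL : ∀ i, ContDiff ℝ (⊤ : ℕ∞) (L i))
    (hV : ∀ i, ContDiff ℝ (⊤ : ℕ∞) (V i))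
    (hginvSm : ∀ i j, ContDiff ℝ (⊤ : ℕ∞) (ginv i j))
    (hLeft : ∀ q : Pt n, lamInv V (lam L q) = q)
    (hRight : ∀ q : Pt n, lam L (lamInv V q) = q)
    (hginv : ∀ (q : Pt n) (s k : Fin n), (∑ r, ginv s r q * gdn L r k q) = kron s k)
    (Γ : Conn n)
    (hΓ : ∀ k i j, ContDiff ℝ (⊤ : ℕ∞) (Γ k i j))
    (hΓsym : ∀ (k i j : Fin n) (q : Pt n), Γ k i j q = Γ k j i q)
    (Φ : Fam n) (hΦ : ∀ i, ContDiff ℝ (⊤ : ℕ∞) (Φ i))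
    (Θ : Fam n) (hΘ : ∀ i, ContDiff ℝ (⊤ : ℕ∞) (Θ i))
    (hΘdef : ∀ (q : Pt n) (i : Fin n),
      Θ i (lam L q) = (∑ s, pdx s (L i) q * q.2 s) + (∑ s, pdv s (L i) q * Φ s q)) :
    ∀ (q : Pt n) (k : Fin n),
      alphaCheck Θ Γ V k (lam L q) = alphaV L ginv Γ Φ k q :=
  stmt6_general n L V ginv hL hV hLeft hginv Γ hΓ hΓsym Φ hΦ Θ hΘ hΘdef
end
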